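/- Let G be a group, n ≥ 3, E the set of idempotents of End F_n(G), and IG(E) the free idempotent generated monoid over E. Every element of the H-class of ē_{11} in IG(E) lies in the submonoid of IG(E) generated by the set {ē_{11} ē_{a,j} ē_{11} : a : {1,…,n} → G with a(1)=1, j ∈ {1,…,n}} ∪ {ē_{1j} ē_{a,1} : a : {1,…,n} → G with a(1)=1, j ∈ {1,…,n}}. -/

import Mathlib

/-- An endomorphism of the rank-`n` free left `G`-act `F_n(G) = G × Fin n`
(the formal symbols `g x_i` are the pairs `(g, i)`), where the action is
`h • (g, i) = (h * g, i)` and equivariance says `(h • x) a = h • (x a)`. -/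
structure ActEnd (G : Type*) [Group G] (n : ℕ) : Type _ where
  toFun : G × Fin n → G × Fin n
  equivariant : ∀ (h : G) (x : G × Fin n),
    toFun (h * x.1, x.2) = (h * (toFun x).1, (toFun x).2)

namespace ActEnd

variable {G : Type*} [Group G] {n : ℕ}

/-- Composition is written left-to-right: `x (a * b) = (x a) b`. -/
instance : Monoid (ActEnd G n) where
  mul a b := ⟨fun x => b.toFun (a.toFun x), by
    intro h x
    try dsimp only
    rw [a.equivariant h x, b.equivariant]⟩
  one := ⟨id, fun _ _ => rfl⟩
  mul_assoc _ _ _ := rfl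
  one_mul _ := rfl
  mul_one _ := rfl

@[simp] theorem mul_toFun (a b : ActEnd G n) (x : G × Fin n) :
    (a * b).toFun x = b.toFun (a.toFun x) := rfl

theorem ext' {a b : ActEnd G n} (h : a.toFun = b.toFun) : a = b := by
  cases a; cases b; cases h; rfl

/-- The rank of an endomorphism of `F_n(G)`: the number of indices `j` such
that `G x_j` meets the image. -/
noncomputable def rank (a : ActEnd G n) : ℕ :=
  Nat.card {j : Fin n // ∃ x, (a.toFun x).2 = j}

end ActEnd

namespace ActEnd

variable {G : Type*} [Group G] {n : ℕ}

/-- The rank-1 idempotent `e_{a,j}` given by `(g x_t) e_{a,j} = (g * a t * (a j)⁻¹) x_j`.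
Taking `a` constantly `1` gives `e_{1j}`, and also `j = 0` gives `e_{11}`
(indices `1, …, n` are realised as `Fin n`, with `1 ↦ 0`). -/
def eaj (a : Fin n → G) (j : Fin n) : ActEnd G n :=
  ⟨fun x => (x.1 * a x.2 * (a j)⁻¹, j), by intro h x; simp [mul_assoc]⟩

theorem eaj_idem (a : Fin n → G) (j : Fin n) : eaj a j * eaj a j = eaj a j := by
  apply ext'
  funext x
  simp [eaj, mul_assoc]

/-- The map `a_g : g' x_t ↦ (g' * g) x_1`. -/
def aMap (g : G) (h0 : 0 < n) : ActEnd G n :=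
  ⟨fun x => (x.1 * g, ⟨0, h0⟩), by intro h x; simp [mul_assoc]⟩

end ActEnd

/-- The principal left ideal `M a` of `a`. -/
def lIdeal {M : Type*} [Monoid M] (a : M) : Set M := Set.range fun m => m * a

/-- The principal right ideal `a M` of `a`. -/
def rIdeal {M : Type*} [Monoid M] (a : M) : Set M := Set.range fun m => a * m

/-- The `H`-class of `e`: all elements that are both `L`- and `R`-related to `e`. -/
def hClass {M : Type*} [Monoid M] (e : M) : Set M :=
  {a | lIdeal a = lIdeal e ∧ rIdeal a = rIdeal e}

/-- The defining relation of the free idempotent generated monoid `IG(E)`: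
`ē f̄ = (e f)‾` whenever `{e, f} ∩ {e f, f e} ≠ ∅`. -/
def igRel (M : Type*) [Monoid M] :
    FreeMonoid {e : M // e * e = e} → FreeMonoid {e : M // e * e = e} → Prop :=
  fun x y => ∃ e f g : {e : M // e * e = e},
    (e.1 * f.1 = e.1 ∨ e.1 * f.1 = f.1 ∨ f.1 * e.1 = e.1 ∨ f.1 * e.1 = f.1) ∧
    e.1 * f.1 = g.1 ∧
    x = FreeMonoid.of e * FreeMonoid.of f ∧ y = FreeMonoid.of g

/-- The free idempotent generated monoid over the biordered set of idempotents
of `M`: the presented monoid with generators `ē` for each idempotent `e` and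
relations `ē f̄ = (e f)‾` whenever `{e, f} ∩ {e f, f e} ≠ ∅`. -/
abbrev IG (M : Type*) [Monoid M] : Type _ := (conGen (igRel M)).Quotient

/-- The generator `ē` of `IG(E)` corresponding to the idempotent `e`. -/
def ebar {M : Type*} [Monoid M] (e : {e : M // e * e = e}) : IG M :=
  (conGen (igRel M)).mk' (FreeMonoid.of e)

/-- `ē_{a,j}` as an element of `IG(E)` for `E` the idempotents of `End F_n(G)`. -/
def igE {G : Type*} [Group G] {n : ℕ} (a : Fin n → G) (j : Fin n) : IG (ActEnd G n) :=
  ebar ⟨ActEnd.eaj a j, ActEnd.eaj_idem a j⟩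

/-- `ē_{11}` as an element of `IG(E)`. -/
def ig11 {G : Type*} [Group G] {n : ℕ} (h0 : 0 < n) : IG (ActEnd G n) :=
  igE (fun _ => (1 : G)) ⟨0, h0⟩

/-!
Writing `ε = ē_{11}`, every `w` in the `H`-class of `ε` satisfies `w = ε w ε`, and `w` is a
product of generators `f̄`. For an idempotent `f` with `(1 x_t) f = c_t x_{m_t}`, the function
`b t = c_t c_1⁻¹` satisfies `f e_{b,j} = e_{b,j}` and `e_{b,j} f = e_{b,m_j}`, while rank-1
idempotents with the same index form a left-zero band. Hence
`ē_{a,j} f̄ = ē_{a,j} ē_{b,j} f̄ = ē_{a,j} ē_{b,m_j}`, so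
`ε w ε = ε ē_{a_1,j_1} ⋯ ē_{a_k,j_k} ε` with all `a_i 1 = 1`, and this telescopes as
`(ε ē_{a_1,j_1} ε)(ē_{1j_1} ē_{a_2,1})(ε ē_{a_2,j_2} ε) ⋯ (ε ē_{a_k,j_k} ε)`.
-/

namespace ActEnd

variable {G : Type*} [Group G] {n : ℕ}

def coeff (f : ActEnd G n) (t : Fin n) : G := (f.toFun (1, t)).1

def index (f : ActEnd G n) (t : Fin n) : Fin n := (f.toFun (1, t)).2

theorem toFun_eq (f : ActEnd G n) (g : G) (t : Fin n) :
    f.toFun (g, t) = (g * f.coeff t, f.index t) := by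
  have h := f.equivariant g (1, t)
  rwa [mul_one] at h

theorem coeff_index_of_mul_self {f : ActEnd G n} (hf : f * f = f) (t : Fin n) :
    f.coeff (f.index t) = 1 := by
  have h : f.coeff t * f.coeff (f.index t) = f.coeff t := by
    simpa only [mul_toFun, toFun_eq, one_mul] using congrArg (fun f => (f.toFun (1, t)).1) hf
  exact mul_eq_left.1 h

@[simp] theorem eaj_toFun (a : Fin n → G) (j : Fin n) (x : G × Fin n) :
    (eaj a j).toFun x = (x.1 * a x.2 * (a j)⁻¹, j) := rfl

theorem eaj_mul_eaj_same_index (a b : Fin n → G) (j : Fin n) :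
    eaj a j * eaj b j = eaj a j :=
  ext' <| funext fun x => by simp

theorem eaj_mul_eaj_same_fun (a : Fin n → G) (j m : Fin n) :
    eaj a j * eaj a m = eaj a m :=
  ext' <| funext fun x => by simp [mul_assoc]

def normCoeff (f : ActEnd G n) (t₀ : Fin n) (t : Fin n) : G := f.coeff t * (f.coeff t₀)⁻¹

theorem normCoeff_self (f : ActEnd G n) (t₀ : Fin n) : f.normCoeff t₀ t₀ = 1 :=
  mul_inv_cancel _

theorem mul_eaj_normCoeff {f : ActEnd G n} (hf : f * f = f) (t₀ j : Fin n) :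
    f * eaj (f.normCoeff t₀) j = eaj (f.normCoeff t₀) j :=
  ext' <| funext fun ⟨g, t⟩ => by
    simp [toFun_eq, normCoeff, coeff_index_of_mul_self hf, mul_assoc]

theorem eaj_normCoeff_mul {f : ActEnd G n} (hf : f * f = f) (t₀ j : Fin n) :
    eaj (f.normCoeff t₀) j * f = eaj (f.normCoeff t₀) (f.index j) :=
  ext' <| funext fun ⟨g, t⟩ => by
    simp [toFun_eq, normCoeff, coeff_index_of_mul_self hf, mul_assoc]

end ActEnd

theorem mul_mul_eq_of_mem_hClass {M : Type*} [Monoid M] {e w : M} (he : e * e = e)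
    (hw : w ∈ hClass e) : e * w * e = w := by
  obtain ⟨u, hu : u * e = w⟩ : w ∈ lIdeal e := hw.1 ▸ ⟨1, one_mul w⟩
  obtain ⟨v, hv : e * v = w⟩ : w ∈ rIdeal e := hw.2 ▸ ⟨1, mul_one w⟩
  have hwe : w * e = w := by rw [← hu, mul_assoc, he]
  have hew : e * w = w := by rw [← hv, ← mul_assoc, he]
  rw [hew, hwe]

section IG

variable {M : Type*} [Monoid M]

theorem closure_range_ebar : Submonoid.closure (Set.range (ebar (M := M))) = ⊤ :=
  PresentedMonoid.closure_range_of (igRel M)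

theorem ebar_mul_ebar_of_basic {e f g : {e : M // e * e = e}}
    (hc : e.1 * f.1 = e.1 ∨ e.1 * f.1 = f.1 ∨ f.1 * e.1 = e.1 ∨ f.1 * e.1 = f.1)
    (hp : e.1 * f.1 = g.1) : ebar e * ebar f = ebar g :=
  (Con.eq _).2 (ConGen.Rel.of _ _ ⟨e, f, g, hc, hp, rfl, rfl⟩)

end IG

section RankOne

variable {G : Type*} [Group G] {n : ℕ}

theorem igE_mul_igE_same_index (a b : Fin n → G) (j : Fin n) :
    igE a j * igE b j = igE a j :=
  ebar_mul_ebar_of_basic (Or.inl (ActEnd.eaj_mul_eaj_same_index a b j))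
    (ActEnd.eaj_mul_eaj_same_index a b j)

theorem igE_mul_igE_same_fun (a : Fin n → G) (j m : Fin n) :
    igE a j * igE a m = igE a m :=
  ebar_mul_ebar_of_basic (Or.inr (Or.inl (ActEnd.eaj_mul_eaj_same_fun a j m)))
    (ActEnd.eaj_mul_eaj_same_fun a j m)

theorem igE_mul_ebar (a : Fin n → G) (t₀ j : Fin n) (f : {e : ActEnd G n // e * e = e}) :
    igE a j * ebar f = igE a j * igE (f.1.normCoeff t₀) (f.1.index j) := by
  have hf : igE (f.1.normCoeff t₀) j * ebar f = igE (f.1.normCoeff t₀) (f.1.index j) :=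
    ebar_mul_ebar_of_basic (Or.inr (Or.inr (Or.inl (ActEnd.mul_eaj_normCoeff f.2 t₀ j))))
      (ActEnd.eaj_normCoeff_mul f.2 t₀ j)
  rw [← hf, ← mul_assoc, igE_mul_igE_same_index]

theorem igE_one_mul_igE_mul_igE (i : Fin n) (a b : Fin n → G) (j m : Fin n)
    (w : IG (ActEnd G n)) :
    igE 1 i * igE a j * igE b m * w * igE 1 i =
      (igE 1 i * igE a j * igE 1 i) * (igE 1 j * igE b i) * (igE 1 i * igE b m * w * igE 1 i) := by
  symm
  calc (igE 1 i * igE a j * igE 1 i) * (igE 1 j * igE b i) * (igE 1 i * igE b m * w * igE 1 i)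
      = igE 1 i * igE a j * (igE 1 i * igE 1 j) * (igE b i * igE 1 i) * igE b m * w * igE 1 i := by
        simp only [mul_assoc]
    _ = igE 1 i * (igE a j * igE 1 j) * (igE b i * igE b m) * w * igE 1 i := by
        rw [igE_mul_igE_same_fun 1 i j, igE_mul_igE_same_index b 1 i]
        simp only [mul_assoc]
    _ = igE 1 i * igE a j * igE b m * w * igE 1 i := by
        rw [igE_mul_igE_same_index a 1 j, igE_mul_igE_same_fun b i m]

def hClassGenerators (i : Fin n) : Set (IG (ActEnd G n)) :=
  {x | ∃ (a : Fin n → G) (j : Fin n), a i = 1 ∧ x = igE 1 i * igE a j * igE 1 i} ∪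
    {x | ∃ (a : Fin n → G) (j : Fin n), a i = 1 ∧ x = igE 1 j * igE a i}

theorem igE_one_mul_igE_mul_mem_closure (i : Fin n) (w : IG (ActEnd G n)) :
    ∀ (a : Fin n → G) (j : Fin n), a i = 1 →
      igE 1 i * igE a j * w * igE 1 i ∈ Submonoid.closure (hClassGenerators i) := by
  have hw : w ∈ Submonoid.closure (Set.range (ebar (M := ActEnd G n))) :=
    (Submonoid.eq_top_iff' _).1 closure_range_ebar w
  induction hw using Submonoid.closure_induction_left with
  | one =>
    intro a j ha
    exact Submonoid.subset_closure (Or.inl ⟨a, j, ha, by rw [mul_one]⟩)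
  | mul_left _ hf w _ ih =>
    obtain ⟨f, rfl⟩ := hf
    intro a j ha
    rw [← mul_assoc, mul_assoc _ (igE a j), igE_mul_ebar a i j f, ← mul_assoc,
      igE_one_mul_igE_mul_igE]
    refine Submonoid.mul_mem _ (Submonoid.mul_mem _ ?_ ?_) (ih _ _ (f.1.normCoeff_self i))
    · exact Submonoid.subset_closure (Or.inl ⟨a, j, ha, rfl⟩)
    · exact Submonoid.subset_closure (Or.inr ⟨_, j, f.1.normCoeff_self i, rfl⟩)

end RankOne

theorem stmt11 {G : Type*} [Group G] {n : ℕ} (hn : 3 ≤ n) :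
    ∀ w ∈ hClass (ig11 (G := G) (n := n) (by omega)),
      w ∈ Submonoid.closure
        ({x | ∃ (a : Fin n → G) (j : Fin n), a ⟨0, by omega⟩ = 1 ∧
            x = ig11 (G := G) (n := n) (by omega) * igE a j * ig11 (G := G) (n := n) (by omega)} ∪
         {x | ∃ (a : Fin n → G) (j : Fin n), a ⟨0, by omega⟩ = 1 ∧
            x = igE (fun _ => (1 : G)) j * igE a ⟨0, by omega⟩}) := by
  have h0 : 0 < n := by omega
  intro w hw
  have hε : ig11 (G := G) h0 * ig11 h0 = ig11 h0 := igE_mul_igE_same_index _ _ _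
  have hw' := igE_one_mul_igE_mul_mem_closure ⟨0, h0⟩ w 1 ⟨0, h0⟩ rfl
  rw [← mul_mul_eq_of_mem_hClass hε hw]
  rwa [show igE (1 : Fin n → G) ⟨0, h0⟩ = ig11 h0 from rfl, hε] at hw'
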